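/- Pseudo-energy stability: under the scheme with convex-splitting chemical potential w^{k+1}_{i,j} = f_c'(ρ^{k+1}_{i,j}) − f_e'(ρ^k_{i,j}) + 2ρ^{k+1}_{i,j} − 2[J⋆ρ^k]_{i,j}, upwind degenerate-mobility fluxes, and pseudo-energy Ê_h(a,b) := E_h(a) + ‖a−b‖²_{ℓ²} + ⟨J⋆(a−b), a−b⟩_h where E_h(a) := h² ∑_{i,j}[f_c(a_{i,j}) − f_e(a_{i,j}) + a_{i,j}²] − ⟨J⋆a, a⟩_h, one has Ê_h(ρ^{k+1}, ρ^k) − Ê_h(ρ^k, ρ^{k−1}) ≤ ‖ρ^{k+1} − ρ^k‖²_{ℓ²}, provided J is nonnegative, even, and h²∑_{n,m} J_{n,m} ≤ 1. -/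

import Mathlib

open Finset

/-- Discrete periodic convolution `[J⋆φ]_{i,j} = h² ∑_{n,m} J_{n,m} φ_{i−n,j−m}`. -/
noncomputable def conv {N : ℕ} [NeZero N] (h : ℝ) (J φ : ZMod N × ZMod N → ℝ) :
    ZMod N × ZMod N → ℝ :=
  fun p => h ^ 2 * ∑ q : ZMod N × ZMod N, J q * φ (p.1 - q.1, p.2 - q.2)

/-- Discrete inner product `⟨φ,ψ⟩_h = h² ∑_{i,j} φ_{i,j} ψ_{i,j}`. -/
noncomputable def ip {N : ℕ} [NeZero N] (h : ℝ) (φ ψ : ZMod N × ZMod N → ℝ) : ℝ :=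
  h ^ 2 * ∑ p : ZMod N × ZMod N, φ p * ψ p

/-- Degenerate upwind mobility `M(x,y) = β [1+x]⁺ [1−y]⁺`. -/
noncomputable def Mob (β x y : ℝ) : ℝ := β * max (1 + x) 0 * max (1 - y) 0

/-- Discrete free energy. -/
noncomputable def Eh {N : ℕ} [NeZero N] (h : ℝ) (fc fe : ℝ → ℝ)
    (J a : ZMod N × ZMod N → ℝ) : ℝ :=
  h ^ 2 * ∑ p : ZMod N × ZMod N, (fc (a p) - fe (a p) + (a p) ^ 2)
    - ip h (conv h J a) a

/-- Pseudo energy. -/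
noncomputable def pseudoE {N : ℕ} [NeZero N] (h : ℝ) (fc fe : ℝ → ℝ)
    (J a b : ZMod N × ZMod N → ℝ) : ℝ :=
  Eh h fc fe J a + ip h (fun p => a p - b p) (fun p => a p - b p)
    + ip h (conv h J (fun p => a p - b p)) (fun p => a p - b p)

/-! Summation by parts turns `⟨w^{k+1}, ρ^{k+1} - ρ^k⟩_h` into `-Δt ∑ (F·u)`, which is `≤ 0`
because the upwind fluxes have the sign of the velocities and the mobility is nonnegative.
The tangent-line inequalities of `f_c` at `ρ^{k+1}` and of `f_e` at `ρ^k`, the identity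
`b² - a² = 2b(b - a) - (b - a)²` and the symmetry of `J` bound
`E_h(ρ^{k+1}) - E_h(ρ^k) + ‖δ‖² + ⟨J⋆δ, δ⟩_h` (with `δ = ρ^{k+1} - ρ^k`) by that same pairing.
What is left, `‖φ‖² + ⟨J⋆φ, φ⟩_h` for `φ = ρ^k - ρ^{k-1}`, is nonnegative because
`|⟨J⋆φ, φ⟩_h| ≤ h² ∑ J ‖φ‖²` by Young's inequality; so the pseudo-energy even decreases. -/

theorem ConvexOn.deriv_mul_sub_le {f : ℝ → ℝ} (hf : ConvexOn ℝ Set.univ f) {x : ℝ}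
    (hd : DifferentiableAt ℝ f x) (y : ℝ) : deriv f x * (y - x) ≤ f y - f x := by
  rcases lt_trichotomy x y with hxy | rfl | hyx
  · have hslope := hf.deriv_le_slope (Set.mem_univ x) (Set.mem_univ y) hxy hd
    rw [slope_def_field, le_div_iff₀ (sub_pos.2 hxy)] at hslope
    exact hslope
  · simp
  · have hslope := hf.slope_le_deriv (Set.mem_univ y) (Set.mem_univ x) hyx hd
    rw [slope_def_field, div_le_iff₀ (sub_pos.2 hyx)] at hslope
    linarith

theorem convex_splitting_le {fc fe : ℝ → ℝ} (hfc : ConvexOn ℝ Set.univ fc)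
    (hfe : ConvexOn ℝ Set.univ fe) {x y : ℝ} (hfcd : DifferentiableAt ℝ fc y)
    (hfed : DifferentiableAt ℝ fe x) :
    fc y - fe y + y ^ 2 - (fc x - fe x + x ^ 2)
      ≤ (deriv fc y - deriv fe x + 2 * y) * (y - x) - (y - x) ^ 2 := by
  have hc := hfc.deriv_mul_sub_le hfcd x
  have he := hfe.deriv_mul_sub_le hfed y
  nlinarith

theorem upwind_flux_mul_nonneg {M₁ M₂ : ℝ} (h₁ : 0 ≤ M₁) (h₂ : 0 ≤ M₂) (u : ℝ) :
    0 ≤ (M₁ * max u 0 + M₂ * min u 0) * u := by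
  rcases le_total 0 u with hu | hu
  · rw [max_eq_left hu, min_eq_right hu]
    nlinarith [mul_nonneg h₁ (mul_self_nonneg u)]
  · rw [max_eq_right hu, min_eq_left hu]
    nlinarith [mul_nonneg h₂ (mul_self_nonneg u)]

theorem Mob_nonneg {β : ℝ} (hβ : 0 ≤ β) (x y : ℝ) : 0 ≤ Mob β x y := by
  unfold Mob
  positivity

section FiniteGroup

variable {G : Type*} [AddCommGroup G] [Fintype G]

theorem sum_mul_sub_shift (w F : G → ℝ) (e : G) :
    ∑ p, w p * (F p - F (p - e)) = ∑ p, (w p - w (p + e)) * F p := by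
  have hshift : ∑ p, w p * F (p - e) = ∑ p, w (p + e) * F p := by
    rw [← Equiv.sum_comp (Equiv.addRight e)]
    simp
  simp only [mul_sub, sub_mul, sum_sub_distrib, hshift]

theorem sum_mul_sub_eq_of_flux_update {Δt h : ℝ} (hh : h ≠ 0) (e₁ e₂ : G)
    {w ρ₀ ρ₁ u₁ u₂ F₁ F₂ : G → ℝ}
    (hu₁ : ∀ p, u₁ p = -(w (p + e₁) - w p) / h) (hu₂ : ∀ p, u₂ p = -(w (p + e₂) - w p) / h)
    (hupdate : ∀ p, ρ₁ p - ρ₀ p = -(Δt / h) * (F₁ p - F₁ (p - e₁) + F₂ p - F₂ (p - e₂))) :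
    ∑ p, w p * (ρ₁ p - ρ₀ p) = -Δt * ∑ p, (F₁ p * u₁ p + F₂ p * u₂ p) := by
  have hdiv : ∀ p, w p * (ρ₁ p - ρ₀ p)
      = -(Δt / h) * (w p * (F₁ p - F₁ (p - e₁)) + w p * (F₂ p - F₂ (p - e₂))) := by
    intro p
    rw [hupdate p]
    ring
  have hgrad : ∀ p, (w p - w (p + e₁)) * F₁ p + (w p - w (p + e₂)) * F₂ p
      = h * (F₁ p * u₁ p + F₂ p * u₂ p) := by
    intro p
    rw [hu₁ p, hu₂ p]
    field_simp
    ring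
  rw [sum_congr rfl fun p _ => hdiv p, ← mul_sum, sum_add_distrib, sum_mul_sub_shift,
    sum_mul_sub_shift, ← sum_add_distrib, sum_congr rfl fun p _ => hgrad p, ← mul_sum]
  field_simp

theorem neg_sum_mul_self_le_sum_mul_shift (φ : G → ℝ) (q : G) :
    -∑ p, φ p * φ p ≤ ∑ p, φ p * φ (p + q) := by
  have hshift : ∑ p, φ (p + q) * φ (p + q) = ∑ p, φ p * φ p :=
    Equiv.sum_comp (Equiv.addRight q) fun p => φ p * φ p
  have hsq : 0 ≤ ∑ p, (φ p + φ (p + q)) * (φ p + φ (p + q)) :=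
    sum_nonneg fun _ _ => mul_self_nonneg _
  have hexpand : ∑ p, (φ p + φ (p + q)) * (φ p + φ (p + q))
      = ∑ p, φ p * φ p + 2 * ∑ p, φ p * φ (p + q) + ∑ p, φ (p + q) * φ (p + q) := by
    simp only [mul_sum, ← sum_add_distrib]
    exact sum_congr rfl fun _ _ => by ring
  linarith

end FiniteGroup

section Lattice

variable {N : ℕ} [NeZero N]

theorem ip_self_nonneg (h : ℝ) (φ : ZMod N × ZMod N → ℝ) : 0 ≤ ip h φ φ :=
  mul_nonneg (sq_nonneg h) (sum_nonneg fun _ _ => mul_self_nonneg _)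

theorem ip_conv_eq_sum (h : ℝ) (J a b : ZMod N × ZMod N → ℝ) :
    ip h (conv h J a) b = h ^ 2 * h ^ 2 * ∑ q, ∑ p, J q * (a p * b (p + q)) := by
  simp only [ip, conv, sum_mul, mul_sum]
  rw [sum_comm]
  refine sum_congr rfl fun q _ => ?_
  rw [← Equiv.sum_comp (Equiv.addRight q)]
  refine sum_congr rfl fun p _ => ?_
  simp only [Equiv.coe_addRight, Prod.fst_add, Prod.snd_add, add_sub_cancel_right]
  ring

theorem ip_conv_comm (h : ℝ) {J : ZMod N × ZMod N → ℝ}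
    (hJeven : ∀ q : ZMod N × ZMod N, J q = J (-q.1, -q.2)) (a b : ZMod N × ZMod N → ℝ) :
    ip h (conv h J a) b = ip h (conv h J b) a := by
  rw [ip_conv_eq_sum, ip_conv_eq_sum, ← Equiv.sum_comp (Equiv.neg _)]
  congr 1
  refine sum_congr rfl fun q _ => ?_
  rw [← Equiv.sum_comp (Equiv.addRight q)]
  refine sum_congr rfl fun p _ => ?_
  simp only [Equiv.neg_apply, Equiv.coe_addRight, add_neg_cancel_right]
  rw [show J (-q) = J q from (hJeven q).symm]
  ring

theorem ip_conv_self_eq (h : ℝ) {J : ZMod N × ZMod N → ℝ}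
    (hJeven : ∀ q : ZMod N × ZMod N, J q = J (-q.1, -q.2)) (a b : ZMod N × ZMod N → ℝ) :
    ip h (conv h J a) a = ip h (conv h J b) b + 2 * ip h (conv h J b) (fun p => a p - b p)
      + ip h (conv h J (fun p => a p - b p)) (fun p => a p - b p) := by
  have hsplit : ip h (conv h J a) a = ip h (conv h J b) b
      + ip h (conv h J b) (fun p => a p - b p) + ip h (conv h J (fun p => a p - b p)) b
      + ip h (conv h J (fun p => a p - b p)) (fun p => a p - b p) := by
    simp only [ip_conv_eq_sum, ← mul_add, ← sum_add_distrib]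
    exact congrArg _ (sum_congr rfl fun q _ => sum_congr rfl fun p _ => by ring)
  rw [hsplit, ip_conv_comm h hJeven (fun p => a p - b p) b]
  ring

theorem ip_self_add_ip_conv_self_nonneg {h : ℝ} {J : ZMod N × ZMod N → ℝ}
    (hJpos : ∀ q, 0 ≤ J q) (hJsum : h ^ 2 * ∑ q : ZMod N × ZMod N, J q ≤ 1)
    (φ : ZMod N × ZMod N → ℝ) : 0 ≤ ip h φ φ + ip h (conv h J φ) φ := by
  set S := ∑ p, φ p * φ p
  have hS : 0 ≤ S := sum_nonneg fun _ _ => mul_self_nonneg _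
  have hcorr : -((∑ q, J q) * S) ≤ ∑ q, ∑ p, J q * (φ p * φ (p + q)) := by
    rw [sum_mul, ← sum_neg_distrib]
    refine sum_le_sum fun q _ => ?_
    rw [← mul_sum, ← mul_neg]
    exact mul_le_mul_of_nonneg_left (neg_sum_mul_self_le_sum_mul_shift φ q) (hJpos q)
  have hsmall : (h ^ 2 * ∑ q, J q) * S ≤ S := mul_le_of_le_one_left hS hJsum
  have h2 : 0 ≤ h ^ 2 := sq_nonneg h
  rw [ip_conv_eq_sum]
  change 0 ≤ h ^ 2 * S + _
  linarith [mul_le_mul_of_nonneg_left hcorr (mul_nonneg h2 h2),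
    mul_le_mul_of_nonneg_left hsmall h2]

theorem Eh_sub_add_le_ip {h : ℝ} {fc fe : ℝ → ℝ} (hfc : ConvexOn ℝ Set.univ fc)
    (hfcd : Differentiable ℝ fc) (hfe : ConvexOn ℝ Set.univ fe) (hfed : Differentiable ℝ fe)
    {J : ZMod N × ZMod N → ℝ} (hJeven : ∀ q : ZMod N × ZMod N, J q = J (-q.1, -q.2))
    {a b w : ZMod N × ZMod N → ℝ}
    (hw : ∀ p, w p = deriv fc (a p) - deriv fe (b p) + 2 * a p - 2 * conv h J b p) :
    Eh h fc fe J a - Eh h fc fe J b + ip h (fun p => a p - b p) (fun p => a p - b p)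
      + ip h (conv h J (fun p => a p - b p)) (fun p => a p - b p)
      ≤ ip h w (fun p => a p - b p) := by
  have hlocal : ∑ p, (fc (a p) - fe (a p) + a p ^ 2) - ∑ p, (fc (b p) - fe (b p) + b p ^ 2)
      ≤ ∑ p, w p * (a p - b p) + 2 * ∑ p, conv h J b p * (a p - b p)
        - ∑ p, (a p - b p) * (a p - b p) := by
    rw [← sum_sub_distrib, mul_sum, ← sum_add_distrib, ← sum_sub_distrib]
    refine sum_le_sum fun p _ => ?_
    rw [hw p]
    nlinarith [convex_splitting_le hfc hfe (hfcd (a p)) (hfed (b p))]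
  have hconv := ip_conv_self_eq h hJeven a b
  unfold Eh ip at *
  linarith [mul_le_mul_of_nonneg_left hlocal (sq_nonneg h)]

theorem ip_sub_nonpos_of_upwind {Δt h β : ℝ} (hΔt : 0 ≤ Δt) (hh : h ≠ 0) (hβ : 0 ≤ β)
    {ρ₀ ρ₁ w ux uy Fx Fy : ZMod N × ZMod N → ℝ}
    (hux : ∀ p : ZMod N × ZMod N, ux p = -(w (p.1 + 1, p.2) - w p) / h)
    (huy : ∀ p : ZMod N × ZMod N, uy p = -(w (p.1, p.2 + 1) - w p) / h)
    (hFx : ∀ p : ZMod N × ZMod N,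
      Fx p = Mob β (ρ₁ p) (ρ₁ (p.1 + 1, p.2)) * max (ux p) 0
        + Mob β (ρ₁ (p.1 + 1, p.2)) (ρ₁ p) * min (ux p) 0)
    (hFy : ∀ p : ZMod N × ZMod N,
      Fy p = Mob β (ρ₁ p) (ρ₁ (p.1, p.2 + 1)) * max (uy p) 0
        + Mob β (ρ₁ (p.1, p.2 + 1)) (ρ₁ p) * min (uy p) 0)
    (hupdate : ∀ p : ZMod N × ZMod N,
      ρ₁ p - ρ₀ p = -(Δt / h) *
        (Fx p - Fx (p.1 - 1, p.2) + Fy p - Fy (p.1, p.2 - 1))) :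
    ip h w (fun p => ρ₁ p - ρ₀ p) ≤ 0 := by
  have hadd₁ : ∀ p : ZMod N × ZMod N, (p.1 + 1, p.2) = p + (1, 0) := fun p => by ext <;> simp
  have hadd₂ : ∀ p : ZMod N × ZMod N, (p.1, p.2 + 1) = p + (0, 1) := fun p => by ext <;> simp
  have hsub₁ : ∀ p : ZMod N × ZMod N, (p.1 - 1, p.2) = p - (1, 0) := fun p => by ext <;> simp
  have hsub₂ : ∀ p : ZMod N × ZMod N, (p.1, p.2 - 1) = p - (0, 1) := fun p => by ext <;> simp
  simp only [hadd₁, hadd₂] at hux huy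
  simp only [hsub₁, hsub₂] at hupdate
  have hflux : 0 ≤ ∑ p, (Fx p * ux p + Fy p * uy p) := by
    refine sum_nonneg fun p _ => add_nonneg ?_ ?_
    · rw [hFx p]
      exact upwind_flux_mul_nonneg (Mob_nonneg hβ _ _) (Mob_nonneg hβ _ _) _
    · rw [hFy p]
      exact upwind_flux_mul_nonneg (Mob_nonneg hβ _ _) (Mob_nonneg hβ _ _) _
  unfold ip
  rw [sum_mul_sub_eq_of_flux_update hh (1, 0) (0, 1) hux huy hupdate, neg_mul, mul_neg,
    neg_nonpos]
  exact mul_nonneg (sq_nonneg h) (mul_nonneg hΔt hflux)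

end Lattice

theorem pseudo_energy_stability {N : ℕ} [NeZero N] (Δt h β : ℝ)
    (hΔt : 0 < Δt) (hh : 0 < h) (hβ : 0 < β)
    (fc fe : ℝ → ℝ)
    (hfc : ConvexOn ℝ Set.univ fc) (hfcd : Differentiable ℝ fc)
    (hfe : ConvexOn ℝ Set.univ fe) (hfed : Differentiable ℝ fe)
    (J : ZMod N × ZMod N → ℝ)
    (hJpos : ∀ q, 0 ≤ J q)
    (hJeven : ∀ q : ZMod N × ZMod N, J q = J (-q.1, -q.2))
    (hJsum : h ^ 2 * ∑ q : ZMod N × ZMod N, J q ≤ 1)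
    (ρm1 ρ0 ρ1 w ux uy Fx Fy : ZMod N × ZMod N → ℝ)
    (hw : ∀ p : ZMod N × ZMod N,
      w p = deriv fc (ρ1 p) - deriv fe (ρ0 p) + 2 * ρ1 p - 2 * conv h J ρ0 p)
    (hux : ∀ p : ZMod N × ZMod N, ux p = -(w (p.1 + 1, p.2) - w p) / h)
    (huy : ∀ p : ZMod N × ZMod N, uy p = -(w (p.1, p.2 + 1) - w p) / h)
    (hFx : ∀ p : ZMod N × ZMod N,
      Fx p = Mob β (ρ1 p) (ρ1 (p.1 + 1, p.2)) * max (ux p) 0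
        + Mob β (ρ1 (p.1 + 1, p.2)) (ρ1 p) * min (ux p) 0)
    (hFy : ∀ p : ZMod N × ZMod N,
      Fy p = Mob β (ρ1 p) (ρ1 (p.1, p.2 + 1)) * max (uy p) 0
        + Mob β (ρ1 (p.1, p.2 + 1)) (ρ1 p) * min (uy p) 0)
    (hupdate : ∀ p : ZMod N × ZMod N,
      ρ1 p - ρ0 p = -(Δt / h) *
        (Fx p - Fx (p.1 - 1, p.2) + Fy p - Fy (p.1, p.2 - 1))) :
    pseudoE h fc fe J ρ1 ρ0 - pseudoE h fc fe J ρ0 ρm1 ≤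
      ip h (fun p => ρ1 p - ρ0 p) (fun p => ρ1 p - ρ0 p) := by
  have henergy := Eh_sub_add_le_ip hfc hfcd hfe hfed hJeven hw
  have hdissip : ip h w (fun p => ρ1 p - ρ0 p) ≤ 0 :=
    ip_sub_nonpos_of_upwind hΔt.le hh.ne' hβ.le hux huy hFx hFy hupdate
  have hprev := ip_self_add_ip_conv_self_nonneg hJpos hJsum (fun p => ρ0 p - ρm1 p)
  have hincr := ip_self_nonneg h (fun p => ρ1 p - ρ0 p)
  unfold pseudoE
  linarith
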